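/- arXiv:2503.05690 — 3 statements merged into one kernel-verified Lean document; each statement's English description precedes it below -/
import Mathlib

section
/- Let φ extend holomorphically near the unit circle, map S¹ to S¹, with φ' nonvanishing on S¹. Then for every z = e^{iθ} on S¹, Re(−z²·(φ''(z)/φ'(z))²) = |φ''(z)/φ'(z)|² + 4·Re(z·φ''(z)/φ'(z)) + 2 − 2|φ'(z)|². -/
/-! On the unit circle `B(w) = w φ'(w) / φ(w)` is real, because `|φ|` is constant there, so
`|B| = |φ'|`. Being real on the circle, `B` has a tangential derivative `i z B'(z)` that is real,
i.e. `Re (z B'(z)) = 0`. Since `z B' = B (1 + A - B)` with `A = z φ''/φ'`, this says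
`Re A = B - 1`, and `Re (-A²) = |A|² - 2 (Re A)²` turns into the identity. -/

open Complex Metric ComplexConjugate

section CircleMap

variable {c z : ℂ} {r : ℝ}

theorem exists_circleMap_eq_of_mem_sphere (hz : z ∈ sphere c r) : ∃ θ, circleMap c r θ = z := by
  rwa [← Set.mem_range, range_circleMap, abs_of_nonneg (nonneg_of_mem_sphere hz)]

theorem HasDerivAt.comp_circleMap {g : ℂ → ℂ} {g' : ℂ} {θ : ℝ}
    (hg : HasDerivAt g g' (circleMap c r θ)) :
    HasDerivAt (g ∘ circleMap c r) ((circleMap c r θ - c) * g' * I) θ := by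
  rw [circleMap_sub_center, mul_right_comm, mul_comm]
  exact hg.comp θ (hasDerivAt_circleMap c r θ)

theorem re_sub_mul_deriv_eq_zero_of_im_eq_zero_on_sphere {g : ℂ → ℂ} (hz : z ∈ sphere c r)
    (hg : DifferentiableAt ℂ g z) (him : ∀ w ∈ sphere c r, (g w).im = 0) :
    ((z - c) * deriv g z).re = 0 := by
  obtain ⟨θ, rfl⟩ := exists_circleMap_eq_of_mem_sphere hz
  have hd := imCLM.hasFDerivAt.comp_hasDerivAt θ hg.hasDerivAt.comp_circleMap
  have hconst : imCLM ∘ g ∘ circleMap c r = fun _ => 0 :=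
    funext fun t => him _ (circleMap_mem_sphere c (nonneg_of_mem_sphere hz) t)
  rw [hconst] at hd
  simpa using ((hasDerivAt_const θ (0 : ℝ)).unique hd).symm

theorem im_sub_mul_deriv_div_eq_zero_of_mapsTo_sphere {φ : ℂ → ℂ} {ρ : ℝ}
    (hz : z ∈ sphere c r) (hφ : DifferentiableAt ℂ φ z)
    (hmap : Set.MapsTo φ (sphere c r) (sphere 0 ρ)) :
    ((z - c) * deriv φ z / φ z).im = 0 := by
  obtain ⟨θ, rfl⟩ := exists_circleMap_eq_of_mem_sphere hz
  have hd := hφ.hasDerivAt.comp_circleMap.norm_sq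
  have hconst : (‖(φ ∘ circleMap c r) ·‖ ^ 2) = fun _ => ρ ^ 2 :=
    funext fun t => congrArg (· ^ 2)
      (mem_sphere_zero_iff_norm.1 (hmap (circleMap_mem_sphere c (nonneg_of_mem_sphere hz) t)))
  rw [hconst] at hd
  have hinner := (hasDerivAt_const θ (ρ ^ 2)).unique hd
  have him :
      ((circleMap c r θ - c) * deriv φ (circleMap c r θ) * conj (φ (circleMap c r θ))).im = 0 := by
    rw [Complex.inner, Function.comp_apply, mul_right_comm _ I, mul_I_re] at hinner
    linarith
  rw [div_eq_mul_inv, inv_def, ← mul_assoc, im_mul_ofReal, him, zero_mul]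

theorem re_sub_mul_deriv_deriv_div_deriv {φ : ℂ → ℂ} {ρ : ℝ} (hz : z ∈ sphere c r) (hr : r ≠ 0)
    (hφ : ∀ w ∈ sphere c r, DifferentiableAt ℂ φ w) (hφ' : DifferentiableAt ℂ (deriv φ) z)
    (hmap : Set.MapsTo φ (sphere c r) (sphere 0 ρ)) (hφz : φ z ≠ 0) (hd : deriv φ z ≠ 0) :
    ((z - c) * deriv (deriv φ) z / deriv φ z).re = ((z - c) * deriv φ z / φ z).re - 1 := by
  set A := (z - c) * deriv (deriv φ) z / deriv φ z with hA_def
  set B := (z - c) * deriv φ z / φ z with hB_def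
  have hB_im : B.im = 0 := im_sub_mul_deriv_div_eq_zero_of_mapsTo_sphere hz (hφ z hz) hmap
  have hc : z - c ≠ 0 := sub_ne_zero.2 (ne_of_mem_sphere hz hr)
  have hB_ne : B ≠ 0 := div_ne_zero (mul_ne_zero hc hd) hφz
  have hg := (((hasDerivAt_id' z).sub_const c).fun_mul hφ'.hasDerivAt).fun_div
    (hφ z hz).hasDerivAt hφz
  have htan := re_sub_mul_deriv_eq_zero_of_im_eq_zero_on_sphere hz hg.differentiableAt
    fun w hw => im_sub_mul_deriv_div_eq_zero_of_mapsTo_sphere hw (hφ w hw) hmap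
  have hlog : (z - c) * deriv (fun w => (w - c) * deriv φ w / φ w) z = B * (1 + A - B) := by
    rw [hg.deriv, hA_def, hB_def]
    field_simp
  rw [hlog] at htan
  have hB_re : B.re ≠ 0 := fun h => hB_ne (Complex.ext h hB_im)
  simp only [mul_re, add_re, sub_re, one_re, hB_im, zero_mul, sub_zero] at htan
  exact mul_left_cancel₀ hB_re (by linear_combination htan)

end CircleMap

theorem Complex.re_neg_sq_eq_of_re_eq_sub_one {a : ℂ} {b : ℝ} (h : a.re = b - 1) :
    (-(a ^ 2)).re = ‖a‖ ^ 2 + 4 * a.re + 2 - 2 * b ^ 2 := by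
  rw [Complex.sq_norm, normSq_apply, neg_re, sq, mul_re]
  linear_combination (-2 * (a.re + b + 1)) * h

/-- For `φ` holomorphic near the unit circle mapping the circle to itself with
nonvanishing derivative, at every point `z` of the unit circle:
`Re(−z²·(φ''/φ')²) = |φ''/φ'|² + 4·Re(z·φ''/φ') + 2 − 2|φ'|²`. -/
theorem second_log_deriv_identity_on_circle (φ : ℂ → ℂ)
    (hφ : ∀ w : ℂ, ‖w‖ = 1 → AnalyticAt ℂ φ w)
    (hmap : ∀ w : ℂ, ‖w‖ = 1 → ‖φ w‖ = 1)
    (hd : ∀ w : ℂ, ‖w‖ = 1 → deriv φ w ≠ 0)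
    (z : ℂ) (hz : ‖z‖ = 1) :
    (-(z ^ 2 * (deriv (deriv φ) z / deriv φ z) ^ 2)).re
      = ‖deriv (deriv φ) z / deriv φ z‖ ^ 2
        + 4 * (z * deriv (deriv φ) z / deriv φ z).re
        + 2 - 2 * ‖deriv φ z‖ ^ 2 := by
  simp_rw [← mem_sphere_zero_iff_norm] at hφ hmap hd
  have hz' : z ∈ sphere (0 : ℂ) 1 := mem_sphere_zero_iff_norm.2 hz
  have hφ_diff : ∀ w ∈ sphere (0 : ℂ) 1, DifferentiableAt ℂ φ w :=
    fun w hw => (hφ w hw).differentiableAt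
  have hφz : φ z ≠ 0 := ne_zero_of_mem_unit_sphere ⟨_, hmap z hz'⟩
  have hA := re_sub_mul_deriv_deriv_div_deriv hz' one_ne_zero hφ_diff
    (hφ z hz').deriv.differentiableAt hmap hφz (hd z hz')
  have hB_im := im_sub_mul_deriv_div_eq_zero_of_mapsTo_sphere hz' (hφ_diff z hz') hmap
  simp only [sub_zero] at hA hB_im
  have hB_sq : (z * deriv φ z / φ z).re ^ 2 = ‖deriv φ z‖ ^ 2 := by
    rw [← sq_abs, abs_re_eq_norm.2 hB_im, norm_div, norm_mul, hz,
      mem_sphere_zero_iff_norm.1 (hmap z hz'), one_mul, div_one]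
  rw [show z ^ 2 * (deriv (deriv φ) z / deriv φ z) ^ 2 = (z * deriv (deriv φ) z / deriv φ z) ^ 2 by
      ring,
    show ‖deriv (deriv φ) z / deriv φ z‖ = ‖z * deriv (deriv φ) z / deriv φ z‖ by
      rw [mul_div_assoc, norm_mul, hz, one_mul],
    ← hB_sq]
  exact re_neg_sq_eq_of_re_eq_sub_one hA
end

section
/- Let φ map S¹ to S¹ holomorphically near S¹ with nonvanishing derivative, and set σ(θ) = log|φ'(e^{iθ})|. Then σ_θθ − (1/2)σ_θ² = −Re(e^{2iθ} S[φ](e^{iθ})) + (1 − |φ'(e^{iθ})|²)/2, where S[φ] is the Schwarzian derivative and subscripts denote derivatives in θ. -/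
/-!
Put `z = e^{iθ}` and `u = z φ''(z) / φ'(z)`. Differentiating `σ` along the circle gives
`σ' = -Im u` and `σ'' = -Re u - Re (z² (φ''/φ')'(z))`, while
`e^{2iθ} S[φ](z) = z² (φ''/φ')'(z) - u²/2`, so the identity reduces to `|φ'(z)| = |1 + Re u|`.
Writing `φ(e^{iθ}) = e^{iψ(θ)}`, the function `ψ' = z φ'(z) / φ(z)` is real with
`|ψ'| = |φ'(z)|`, and `ψ'' = i ψ' (1 + u - ψ')`; as `ψ''` is real too and `ψ' ≠ 0`,
`ψ' = 1 + Re u`.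
-/

open Complex

/-- The Schwarzian derivative `S[f] = (f''/f')' - (1/2)(f''/f')²`. -/
noncomputable def schwarzian (f : ℂ → ℂ) (z : ℂ) : ℂ :=
  deriv (fun w => deriv (deriv f) w / deriv f w) z
    - (deriv (deriv f) z / deriv f z) ^ 2 / 2

open ComplexConjugate

theorem schwarzian_eq_logDeriv (f : ℂ → ℂ) (z : ℂ) :
    schwarzian f z = deriv (logDeriv (deriv f)) z - logDeriv (deriv f) z ^ 2 / 2 :=
  rfl

theorem HasDerivAt.complex_re {g : ℝ → ℂ} {g' : ℂ} {t : ℝ} (hg : HasDerivAt g g' t) :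
    HasDerivAt (fun s => (g s).re) g'.re t :=
  reCLM.hasFDerivAt.comp_hasDerivAt t hg

theorem HasDerivAt.im_eq_zero_of_forall_im_eq_zero {g : ℝ → ℂ} {g' : ℂ} {t : ℝ}
    (hg : HasDerivAt g g' t) (him : ∀ s, (g s).im = 0) : g'.im = 0 := by
  have h : HasDerivAt (fun s => (g s).im) g'.im t := imCLM.hasFDerivAt.comp_hasDerivAt t hg
  simp only [him] at h
  exact h.unique (hasDerivAt_const t 0)

theorem HasDerivAt.re_div_eq_zero_of_forall_norm_eq_one {γ : ℝ → ℂ} {γ' : ℂ} {t : ℝ}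
    (hγ : HasDerivAt γ γ' t) (h1 : ∀ s, ‖γ s‖ = 1) : (γ' / γ t).re = 0 := by
  have h := hγ.norm_sq
  simp only [h1, one_pow] at h
  have hinner : (γ' * conj (γ t)).re = 0 := by
    have := h.unique (hasDerivAt_const t 1)
    rw [Complex.inner] at this
    linarith
  rwa [div_eq_mul_inv, inv_def, normSq_eq_norm_sq, h1, one_pow, inv_one, ofReal_one, mul_one]

theorem HasDerivAt.log_norm {g : ℝ → ℂ} {g' : ℂ} {t : ℝ} (hg : HasDerivAt g g' t)
    (h0 : g t ≠ 0) : HasDerivAt (fun s => Real.log ‖g s‖) (g' / g t).re t := by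
  have h := (hg.norm_sq.log (by positivity)).div_const 2
  have hlog : (fun s => Real.log (‖g s‖ ^ 2) / 2) = fun s => Real.log ‖g s‖ := by
    funext s
    rw [Real.log_pow]
    push_cast
    ring
  rw [hlog] at h
  refine h.congr_deriv ?_
  rw [Complex.inner, div_re, mul_re, conj_re, conj_im, normSq_eq_norm_sq]
  ring

theorem hasDerivAt_exp_ofReal_mul_I (t : ℝ) :
    HasDerivAt (fun s : ℝ => cexp (s * I)) (I * cexp (t * I)) t :=
  ((hasDerivAt_id (t : ℂ)).mul_const I).cexp.comp_ofReal.congr_deriv (by rw [id, one_mul, mul_comm])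

theorem HasDerivAt.comp_exp_ofReal_mul_I {f : ℂ → ℂ} {f' : ℂ} {t : ℝ}
    (hf : HasDerivAt f f' (cexp (t * I))) :
    HasDerivAt (fun s : ℝ => f (cexp (s * I))) (I * cexp (t * I) * f') t :=
  (hf.comp t (hasDerivAt_exp_ofReal_mul_I t)).congr_deriv (by ring)

theorem hasDerivAt_log_norm_comp_exp_ofReal_mul_I {f : ℂ → ℂ} {t : ℝ}
    (hf : DifferentiableAt ℂ f (cexp (t * I))) (h0 : f (cexp (t * I)) ≠ 0) :
    HasDerivAt (fun s : ℝ => Real.log ‖f (cexp (s * I))‖)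
      (I * cexp (t * I) * logDeriv f (cexp (t * I))).re t := by
  rw [logDeriv_apply, ← mul_div_assoc]
  exact hf.hasDerivAt.comp_exp_ofReal_mul_I.log_norm h0

theorem hasDerivAt_I_mul_exp_ofReal_mul_I_mul_comp {g : ℂ → ℂ} {t : ℝ}
    (hg : DifferentiableAt ℂ g (cexp (t * I))) :
    HasDerivAt (fun s : ℝ => I * cexp (s * I) * g (cexp (s * I)))
      (-(cexp (t * I) * g (cexp (t * I)) + cexp (t * I) ^ 2 * deriv g (cexp (t * I)))) t := by
  refine (((hasDerivAt_exp_ofReal_mul_I t).const_mul I).mul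
    hg.hasDerivAt.comp_exp_ofReal_mul_I).congr_deriv ?_
  linear_combination (cexp (t * I) * g (cexp (t * I)) + cexp (t * I) ^ 2 * deriv g (cexp (t * I)))
    * I_sq

section CircleMap

variable {φ : ℂ → ℂ} {t : ℝ}

/-- If `φ (exp (θ * I)) = exp (ψ θ * I)`, this is `ψ'`. -/
noncomputable def liftDeriv (φ : ℂ → ℂ) (t : ℝ) : ℂ :=
  cexp (t * I) * deriv φ (cexp (t * I)) / φ (cexp (t * I))

theorem im_liftDeriv_eq_zero (hmap : ∀ w : ℂ, ‖w‖ = 1 → ‖φ w‖ = 1)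
    (hφ : DifferentiableAt ℂ φ (cexp (t * I))) : (liftDeriv φ t).im = 0 := by
  have h := hφ.hasDerivAt.comp_exp_ofReal_mul_I.re_div_eq_zero_of_forall_norm_eq_one
    fun s => hmap _ (norm_exp_ofReal_mul_I s)
  have hI : liftDeriv φ t
      = -I * (I * cexp (t * I) * deriv φ (cexp (t * I)) / φ (cexp (t * I))) := by
    rw [liftDeriv]
    ring_nf
    rw [I_sq]
    ring
  rw [hI, neg_mul, neg_im, mul_im, I_re, I_im, h]
  simp

theorem hasDerivAt_liftDeriv (hφ : DifferentiableAt ℂ φ (cexp (t * I)))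
    (hφ' : DifferentiableAt ℂ (deriv φ) (cexp (t * I))) (hφ0 : φ (cexp (t * I)) ≠ 0)
    (hd : deriv φ (cexp (t * I)) ≠ 0) :
    HasDerivAt (liftDeriv φ)
      (I * liftDeriv φ t * (1 + cexp (t * I) * logDeriv (deriv φ) (cexp (t * I)) - liftDeriv φ t))
      t := by
  refine (((hasDerivAt_exp_ofReal_mul_I t).mul hφ'.hasDerivAt.comp_exp_ofReal_mul_I).div
    hφ.hasDerivAt.comp_exp_ofReal_mul_I hφ0).congr_deriv ?_
  rw [liftDeriv, logDeriv_apply, Pi.mul_apply]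
  set z := cexp (t * I)
  field_simp

theorem liftDeriv_eq_one_add_re (hmap : ∀ w : ℂ, ‖w‖ = 1 → ‖φ w‖ = 1)
    (hφ : ∀ w : ℂ, ‖w‖ = 1 → DifferentiableAt ℂ φ w)
    (hφ' : DifferentiableAt ℂ (deriv φ) (cexp (t * I))) (hd : deriv φ (cexp (t * I)) ≠ 0) :
    liftDeriv φ t = ↑(1 + (cexp (t * I) * logDeriv (deriv φ) (cexp (t * I))).re) := by
  have hreal (s : ℝ) : (liftDeriv φ s).im = 0 :=
    im_liftDeriv_eq_zero hmap (hφ _ (norm_exp_ofReal_mul_I s))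
  have hφ0 : φ (cexp (t * I)) ≠ 0 := by
    rw [← norm_ne_zero_iff, hmap _ (norm_exp_ofReal_mul_I t)]
    exact one_ne_zero
  have hc0 : liftDeriv φ t ≠ 0 := div_ne_zero (mul_ne_zero (exp_ne_zero _) hd) hφ0
  have h := (hasDerivAt_liftDeriv (hφ _ (norm_exp_ofReal_mul_I t)) hφ' hφ0
    hd).im_eq_zero_of_forall_im_eq_zero hreal
  set c := liftDeriv φ t
  set u := cexp (t * I) * logDeriv (deriv φ) (cexp (t * I))
  have hc : c = c.re := Complex.ext (by simp) (by simp [c, hreal t])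
  rw [hc] at h hc0 ⊢
  simp only [mul_im, mul_re, I_re, I_im, sub_re, sub_im, add_re, add_im, one_re, one_im, ofReal_re,
    ofReal_im] at h
  have hprod : c.re * (1 + u.re - c.re) = 0 := by linarith
  have hc0' : c.re ≠ 0 := by exact_mod_cast hc0
  congr 1
  linarith [(mul_eq_zero.mp hprod).resolve_left hc0']

theorem norm_deriv_sq_eq (hmap : ∀ w : ℂ, ‖w‖ = 1 → ‖φ w‖ = 1)
    (hφ : ∀ w : ℂ, ‖w‖ = 1 → DifferentiableAt ℂ φ w)
    (hφ' : DifferentiableAt ℂ (deriv φ) (cexp (t * I))) (hd : deriv φ (cexp (t * I)) ≠ 0) :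
    ‖deriv φ (cexp (t * I))‖ ^ 2
      = (1 + (cexp (t * I) * logDeriv (deriv φ) (cexp (t * I))).re) ^ 2 := by
  have h := congrArg norm (liftDeriv_eq_one_add_re hmap hφ hφ' hd)
  rw [liftDeriv, norm_div, norm_mul, norm_exp_ofReal_mul_I, hmap _ (norm_exp_ofReal_mul_I t),
    one_mul, div_one, norm_real, Real.norm_eq_abs] at h
  rw [h, sq_abs]

end CircleMap

/-- For `φ` holomorphic near the unit circle mapping the circle to itself with nonvanishing
derivative, and `σ(θ) = log|φ'(e^{iθ})|`, one has
`σ_θθ − (1/2)σ_θ² = −Re(e^{2iθ} S[φ](e^{iθ})) + (1 − |φ'(e^{iθ})|²)/2`. -/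
theorem log_deriv_schwarzian_identity (φ : ℂ → ℂ) (σ : ℝ → ℝ)
    (hφ : ∀ w : ℂ, ‖w‖ = 1 → AnalyticAt ℂ φ w)
    (hmap : ∀ w : ℂ, ‖w‖ = 1 → ‖φ w‖ = 1)
    (hd : ∀ w : ℂ, ‖w‖ = 1 → deriv φ w ≠ 0)
    (hσ : σ = fun θ : ℝ => Real.log ‖deriv φ (Complex.exp (θ * I))‖)
    (θ : ℝ) :
    deriv (deriv σ) θ - (deriv σ θ) ^ 2 / 2
      = -(Complex.exp (2 * θ * I) * schwarzian φ (Complex.exp (θ * I))).re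
        + (1 - (‖deriv φ (Complex.exp (θ * I))‖) ^ 2) / 2 := by
  rw [schwarzian_eq_logDeriv]
  set L := logDeriv (deriv φ)
  have hφ' (t : ℝ) : AnalyticAt ℂ (deriv φ) (cexp (t * I)) :=
    (hφ _ (norm_exp_ofReal_mul_I t)).deriv
  have hσ' : deriv σ = fun t : ℝ => (I * cexp (t * I) * L (cexp (t * I))).re := by
    funext t
    rw [hσ]
    exact (hasDerivAt_log_norm_comp_exp_ofReal_mul_I (hφ' t).differentiableAt
      (hd _ (norm_exp_ofReal_mul_I t))).deriv
  have hL : DifferentiableAt ℂ L (cexp (θ * I)) :=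
    ((hφ' θ).deriv.div (hφ' θ) (hd _ (norm_exp_ofReal_mul_I θ))).differentiableAt
  have hσ'' := (hasDerivAt_I_mul_exp_ofReal_mul_I_mul_comp hL).complex_re.deriv
  have hnorm := norm_deriv_sq_eq hmap (fun w hw => (hφ w hw).differentiableAt)
    (hφ' θ).differentiableAt (hd _ (norm_exp_ofReal_mul_I θ))
  have hexp : cexp (2 * θ * I) = cexp (θ * I) ^ 2 := by
    rw [← exp_nat_mul]
    ring_nf
  rw [hσ', hσ'', hnorm, hexp]
  beta_reduce
  set z := cexp (θ * I)
  set u := z * L z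
  rw [show I * z * L z = I * u by ring,
    show z ^ 2 * (deriv L z - L z ^ 2 / 2) = z ^ 2 * deriv L z - u ^ 2 / 2 by ring]
  simp only [neg_re, add_re, sub_re, div_ofNat_re, sq u, mul_re, I_re, I_im]
  ring
end

section
/- Fix z₀ ∈ S¹ and λ ∈ ℝ, and define the Möbius map α(z) = ((2i+λ)z₀z − z₀²λ)/(λz + (2i−λ)z₀). Then α(z₀) = z₀, α'(z₀) = 1, and −i z₀ α''(z₀) = λ. Moreover, letting 𝔠(z) = i(1 + z/z₀)/(1 − z/z₀) be the Cayley map sending z₀ to ∞ and 0 to i, one has 𝔠(α(0)) = i − λ. -/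
open Complex

/-!
Write `α` as `w ↦ (a w + b)/(c w + d)` with `a = (2i+λ)z₀`, `b = -z₀²λ`, `c = λ`, `d = (2i-λ)z₀`.
Then `c z₀ + d = 2i z₀` and `ad - bc = -4z₀²`, so the derivatives
`α' = (ad - bc)/(c w + d)²` and `α'' = -2c(ad - bc)/(c w + d)³` evaluate at `z₀` to `1` and `iλ/z₀`.
Finally `α(0)/z₀ = -λ/(2i - λ)`, and the Cayley map turns this into `i - λ`.
-/

section Mobius

variable {𝕜 : Type*} [NontriviallyNormedField 𝕜]

def mobius (a b c d : 𝕜) (w : 𝕜) : 𝕜 := (a * w + b) / (c * w + d)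

variable {a b c d z : 𝕜}

theorem hasDerivAt_mobius (h : c * z + d ≠ 0) :
    HasDerivAt (mobius a b c d) ((a * d - b * c) / (c * z + d) ^ 2) z := by
  have hnum : HasDerivAt (fun w => a * w + b) a z := by
    simpa using ((hasDerivAt_id z).const_mul a).add_const b
  have hden : HasDerivAt (fun w => c * w + d) c z := by
    simpa using ((hasDerivAt_id z).const_mul c).add_const d
  exact (hnum.fun_div hden h).congr_deriv (by ring)

theorem deriv_mobius_eventuallyEq (h : c * z + d ≠ 0) :
    deriv (mobius a b c d) =ᶠ[nhds z] fun w => (a * d - b * c) / (c * w + d) ^ 2 := by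
  have hpole : ∀ᶠ w in nhds z, c * w + d ≠ 0 :=
    (by fun_prop : Continuous fun w => c * w + d).continuousAt.eventually_ne h
  filter_upwards [hpole] with w hw
  exact (hasDerivAt_mobius hw).deriv

theorem deriv_deriv_mobius (h : c * z + d ≠ 0) :
    deriv (deriv (mobius a b c d)) z = -2 * c * (a * d - b * c) / (c * z + d) ^ 3 := by
  rw [(deriv_mobius_eventuallyEq h).deriv_eq]
  have hden : HasDerivAt (fun w => (c * w + d) ^ 2) (2 * (c * z + d) * c) z := by
    simpa using (((hasDerivAt_id z).const_mul c).add_const d).fun_pow 2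
  refine ((hasDerivAt_const z (a * d - b * c)).div hden (pow_ne_zero 2 h)).deriv.trans ?_
  field_simp
  ring

end Mobius

theorem two_mul_I_sub_ofReal_ne_zero (x : ℝ) : 2 * I - x ≠ 0 := by
  intro h
  simpa using congrArg Complex.im h

theorem cayley_neg_ofReal_div_two_mul_I_sub (x : ℝ) :
    I * (1 + -x / (2 * I - x)) / (1 - -x / (2 * I - x)) = I - x := by
  have h := two_mul_I_sub_ofReal_ne_zero x
  rw [one_add_div h, one_sub_div h, mul_div_assoc, div_div_div_cancel_right₀ h]
  field_simp
  ring

/-- For `z₀` on the unit circle and `λ ∈ ℝ`, the Möbius map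
`α(z) = ((2i+λ)z₀z − z₀²λ)/(λz + (2i−λ)z₀)` satisfies `α(z₀) = z₀`, `α'(z₀) = 1`,
`−i z₀ α''(z₀) = λ`, and for the Cayley map `𝔠(z) = i(1 + z/z₀)/(1 − z/z₀)` one has
`𝔠(α(0)) = i − λ`. -/
theorem osculating_mobius_horocyclic_displacement (z₀ : ℂ) (hz₀ : ‖z₀‖ = 1)
    (lam : ℝ) :
    letI α : ℂ → ℂ := fun z =>
      ((2 * I + (lam : ℂ)) * z₀ * z - z₀ ^ 2 * (lam : ℂ))
        / ((lam : ℂ) * z + (2 * I - (lam : ℂ)) * z₀)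
    α z₀ = z₀
    ∧ deriv α z₀ = 1
    ∧ -I * z₀ * deriv (deriv α) z₀ = (lam : ℂ)
    ∧ I * (1 + α 0 / z₀) / (1 - α 0 / z₀) = I - (lam : ℂ) := by
  have hz : z₀ ≠ 0 := norm_ne_zero_iff.mp (hz₀ ▸ one_ne_zero)
  have hα : (fun z => ((2 * I + (lam : ℂ)) * z₀ * z - z₀ ^ 2 * (lam : ℂ))
        / ((lam : ℂ) * z + (2 * I - (lam : ℂ)) * z₀))
      = mobius ((2 * I + lam) * z₀) (-(z₀ ^ 2 * lam)) lam ((2 * I - lam) * z₀) := by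
    funext z
    simp only [mobius]
    ring
  have hpole : (lam : ℂ) * z₀ + (2 * I - lam) * z₀ = 2 * I * z₀ := by ring
  have hdet :
      (2 * I + lam) * z₀ * ((2 * I - lam) * z₀) - -(z₀ ^ 2 * lam) * lam = -4 * z₀ ^ 2 := by
    linear_combination 4 * z₀ ^ 2 * I_sq
  have hpole_ne : (lam : ℂ) * z₀ + (2 * I - lam) * z₀ ≠ 0 := by
    rw [hpole]; exact mul_ne_zero (mul_ne_zero two_ne_zero I_ne_zero) hz
  rw [hα]
  refine ⟨?_, ?_, ?_, ?_⟩
  · rw [mobius, div_eq_iff hpole_ne]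
    ring
  · rw [(hasDerivAt_mobius hpole_ne).deriv, hdet, hpole]
    field_simp
    linear_combination (-4) * I_sq
  · rw [deriv_deriv_mobius hpole_ne, hdet, hpole]
    field_simp
    linear_combination (-4 * (lam : ℂ)) * I_sq
  · have hq : mobius ((2 * I + lam) * z₀) (-(z₀ ^ 2 * lam)) lam ((2 * I - lam) * z₀) 0 / z₀
        = -lam / (2 * I - lam) := by
      have := two_mul_I_sub_ofReal_ne_zero lam
      simp only [mobius]
      field_simp
      ring
    rw [hq, cayley_neg_ofReal_div_two_mul_I_sub]
end
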